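/- The Ramanujan sum satisfies von Sterneck's formula: c_n(m) = μ(n/gcd(m,n))·φ(n)/φ(n/gcd(m,n)), where μ is the Möbius function and φ the Euler totient function. -/

import Mathlib

noncomputable def ramanujanSum (n m : ℕ) : ℂ :=
  ∑ k ∈ (Finset.Icc 1 n).filter (fun k => Nat.gcd k n = 1),
    Complex.exp (2 * Real.pi * Complex.I * k * m / n)

/-!
Sieving out the condition `gcd k n = 1` with `∑ d ∣ gcd k n, μ d` and summing the geometric
series that remain gives `c_n(m) = ∑ d ∣ n, μ d · η_m (n / d)`, where `η_m e = e` if `e ∣ m`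
and `0` otherwise (`η_m = idOnDivisors m`); that is, `n ↦ c_n(m)` is the Dirichlet convolution
`μ * η_m`. Both this convolution and the right-hand side of von Sterneck's formula are
multiplicative in `n`, so it suffices to compare them at prime powers `p ^ k`: writing
`gcd m (p ^ k) = p ^ i`, both equal `p ^ k - p ^ (k - 1)`, `-p ^ (k - 1)` or `0` according as
`i = k`, `i = k - 1` or `i < k - 1`.
-/

open Finset ArithmeticFunction
open scoped ArithmeticFunction.Moebius

theorem sum_Icc_pow_eq_zero_of_pow_eq_one {K : Type*} [Field K] {w : K} {N : ℕ}
    (hw : w ^ N = 1) (hw1 : w ≠ 1) : ∑ j ∈ Icc 1 N, w ^ j = 0 := by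
  rw [← Ico_add_one_right_eq_Icc, geom_sum_Ico hw1 (by omega), pow_succ, hw, one_mul, pow_one,
    sub_self, zero_div]

theorem IsPrimitiveRoot.sum_Icc_pow_pow {K : Type*} [Field K] {z : K} {N : ℕ}
    (hz : IsPrimitiveRoot z N) (m : ℕ) :
    ∑ j ∈ Icc 1 N, (z ^ m) ^ j = if N ∣ m then (N : K) else 0 := by
  split_ifs with h
  · simp [(hz.pow_eq_one_iff_dvd m).mpr h]
  · refine sum_Icc_pow_eq_zero_of_pow_eq_one ?_ (mt (hz.pow_eq_one_iff_dvd m).mp h)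
    rw [← pow_mul, mul_comm, pow_mul, hz.pow_eq_one, one_pow]

theorem Nat.sum_Icc_filter_dvd {M : Type*} [AddCommMonoid M] (f : ℕ → M) {d : ℕ} (hd : d ≠ 0)
    (n : ℕ) : ∑ k ∈ Icc 1 n with d ∣ k, f k = ∑ j ∈ Icc 1 (n / d), f (d * j) := by
  have hmultiples : {k ∈ Icc 1 n | d ∣ k} = (Icc 1 (n / d)).image (d * ·) := by
    ext k
    simp only [mem_filter, mem_Icc, mem_image, Nat.le_div_iff_mul_le (Nat.pos_of_ne_zero hd)]
    constructor
    · rintro ⟨⟨hk1, hkn⟩, j, rfl⟩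
      exact ⟨j, ⟨Nat.pos_of_ne_zero (by rintro rfl; simp at hk1), by linarith⟩, rfl⟩
    · rintro ⟨j, ⟨hj1, hjn⟩, rfl⟩
      exact ⟨⟨Nat.one_le_iff_ne_zero.mpr (mul_ne_zero hd (by omega)), by linarith⟩,
        dvd_mul_right d j⟩
  rw [hmultiples, sum_image fun a _ b _ h => Nat.eq_of_mul_eq_mul_left (Nat.pos_of_ne_zero hd) h]

theorem sum_moebius_divisors_filter_dvd {R : Type*} [Ring R] {n : ℕ} (hn : n ≠ 0) (k : ℕ) :
    ∑ d ∈ n.divisors with d ∣ k, (μ d : R) = if k.Coprime n then 1 else 0 := by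
  have hdiv : {d ∈ n.divisors | d ∣ k} = (k.gcd n).divisors := by
    ext d
    simp only [mem_filter, Nat.mem_divisors, Nat.dvd_gcd_iff, ne_eq, Nat.gcd_eq_zero_iff, hn,
      and_false, not_false_eq_true, and_true]
    tauto
  have h := congrArg (· (k.gcd n)) (coe_moebius_mul_coe_zeta (R := R))
  simp only [coe_mul_zeta_apply, one_apply, intCoe_apply] at h
  rw [hdiv, h]

theorem sum_filter_coprime_eq_sum_moebius {R : Type*} [CommRing R] (f : ℕ → R) (n : ℕ) :
    ∑ k ∈ Icc 1 n with k.Coprime n, f k =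
      ∑ d ∈ n.divisors, (μ d : R) * ∑ j ∈ Icc 1 (n / d), f (d * j) := by
  rcases eq_or_ne n 0 with rfl | hn
  · simp
  calc ∑ k ∈ Icc 1 n with k.Coprime n, f k
      = ∑ k ∈ Icc 1 n, ∑ d ∈ n.divisors, if d ∣ k then (μ d : R) * f k else 0 := by
        rw [sum_filter]
        refine sum_congr rfl fun k _ => ?_
        rw [← sum_filter, ← sum_mul, sum_moebius_divisors_filter_dvd hn, ite_mul, one_mul,
          zero_mul]
    _ = ∑ d ∈ n.divisors, (μ d : R) * ∑ k ∈ Icc 1 n with d ∣ k, f k := by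
        rw [sum_comm]
        refine sum_congr rfl fun d _ => ?_
        rw [mul_sum, sum_filter]
    _ = _ := by
        refine sum_congr rfl fun d hd => ?_
        rw [Nat.sum_Icc_filter_dvd f (Nat.ne_of_gt (Nat.pos_of_mem_divisors hd))]

noncomputable def idOnDivisors (m : ℕ) : ArithmeticFunction ℂ :=
  ⟨fun e => if e ∣ m then (e : ℂ) else 0, by simp⟩

theorem idOnDivisors_apply (m e : ℕ) : idOnDivisors m e = if e ∣ m then (e : ℂ) else 0 := rfl

theorem ramanujanSum_eq_moebius_mul (n m : ℕ) :
    ramanujanSum n m = (↑μ * idOnDivisors m) n := by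
  rcases eq_or_ne n 0 with rfl | hn
  · simp [ramanujanSum]
  set z : ℂ := Complex.exp (2 * Real.pi * Complex.I / n)
  have hz : IsPrimitiveRoot z n := Complex.isPrimitiveRoot_exp n hn
  have hterm (k : ℕ) : Complex.exp (2 * Real.pi * Complex.I * k * m / n) = (z ^ m) ^ k := by
    rw [← pow_mul, ← Complex.exp_nat_mul]
    push_cast
    ring_nf
  rw [ramanujanSum, mul_apply, Nat.sum_divisorsAntidiagonal
    (f := fun d e => (μ : ArithmeticFunction ℂ) d * idOnDivisors m e)]
  simp only [hterm]
  rw [sum_filter_coprime_eq_sum_moebius (fun k => (z ^ m) ^ k)]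
  refine sum_congr rfl fun d hd => ?_
  obtain ⟨hdn, -⟩ := Nat.mem_divisors.mp hd
  have hzd : IsPrimitiveRoot (z ^ d) (n / d) :=
    hz.pow (Nat.pos_of_ne_zero hn) (Nat.mul_div_cancel' hdn).symm
  rw [intCoe_apply, idOnDivisors_apply, ← hzd.sum_Icc_pow_pow m, pow_right_comm]
  simp only [pow_mul]

theorem isMultiplicative_idOnDivisors (m : ℕ) : (idOnDivisors m).IsMultiplicative := by
  refine ⟨by simp [idOnDivisors_apply], fun {a b} hab => ?_⟩
  have hmul : a * b ∣ m ↔ a ∣ m ∧ b ∣ m :=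
    ⟨fun h => ⟨(dvd_mul_right a b).trans h, (dvd_mul_left b a).trans h⟩,
      fun h => hab.mul_dvd_of_dvd_of_dvd h.1 h.2⟩
  simp only [idOnDivisors_apply, hmul]
  split_ifs <;> simp_all

noncomputable def vonSterneckFunction (m : ℕ) : ArithmeticFunction ℂ :=
  ⟨fun n => ((μ (n / Nat.gcd m n) : ℤ) : ℂ) * (Nat.totient n : ℂ) /
    (Nat.totient (n / Nat.gcd m n) : ℂ), by simp⟩

theorem vonSterneckFunction_apply (m n : ℕ) :
    vonSterneckFunction m n = ((μ (n / Nat.gcd m n) : ℤ) : ℂ) * (Nat.totient n : ℂ) /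
      (Nat.totient (n / Nat.gcd m n) : ℂ) :=
  rfl

theorem Nat.Coprime.mul_div_gcd_mul {a b : ℕ} (hab : a.Coprime b) (m : ℕ) :
    a * b / m.gcd (a * b) = a / m.gcd a * (b / m.gcd b) := by
  rw [Nat.Coprime.gcd_mul m hab, Nat.div_mul_div_comm (m.gcd_dvd_right a) (m.gcd_dvd_right b)]

theorem isMultiplicative_vonSterneckFunction (m : ℕ) :
    (vonSterneckFunction m).IsMultiplicative := by
  refine ⟨by simp [vonSterneckFunction_apply], fun {a b} hab => ?_⟩
  have hcop : (a / m.gcd a).Coprime (b / m.gcd b) :=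
    (hab.coprime_dvd_left (Nat.div_dvd_of_dvd (m.gcd_dvd_right a))).coprime_dvd_right
      (Nat.div_dvd_of_dvd (m.gcd_dvd_right b))
  simp only [vonSterneckFunction_apply, hab.mul_div_gcd_mul,
    isMultiplicative_moebius.map_mul_of_coprime hcop, Nat.totient_mul hab, Nat.totient_mul hcop]
  push_cast
  ring

theorem coe_moebius_mul_apply_prime_pow_succ {R : Type*} [Ring R] (f : ArithmeticFunction R)
    {p : ℕ} (hp : p.Prime) (k : ℕ) : (↑μ * f) (p ^ (k + 1)) = f (p ^ (k + 1)) - f (p ^ k) := by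
  rw [mul_apply, Nat.sum_divisorsAntidiagonal (f := fun d e => (μ : ArithmeticFunction R) d * f e),
    Nat.sum_divisors_prime_pow hp, sum_range_succ', sum_range_succ', sum_eq_zero]
  · simp [moebius_apply_prime hp, pow_succ, hp.pos, sub_eq_add_neg, add_comm]
  · intro i _
    rw [intCoe_apply, moebius_apply_prime_pow hp (by omega), if_neg (by omega), Int.cast_zero,
      zero_mul]

theorem idOnDivisors_apply_prime_pow {m p i j k : ℕ} (hp : p.Prime) (hg : m.gcd (p ^ k) = p ^ i)
    (hjk : j ≤ k) : idOnDivisors m (p ^ j) = if j ≤ i then (p ^ j : ℂ) else 0 := by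
  have hdvd : p ^ j ∣ m ↔ j ≤ i := by
    rw [← Nat.pow_dvd_pow_iff_le_right hp.one_lt, ← hg, Nat.dvd_gcd_iff]
    exact (and_iff_left (pow_dvd_pow p hjk)).symm
  simp [idOnDivisors_apply, hdvd]

theorem moebius_mul_idOnDivisors (m : ℕ) : ↑μ * idOnDivisors m = vonSterneckFunction m := by
  refine (IsMultiplicative.eq_iff_eq_on_prime_powers _
    (isMultiplicative_moebius.intCast.mul (isMultiplicative_idOnDivisors m)) _
    (isMultiplicative_vonSterneckFunction m)).mpr ?_
  rintro p (_ | k) hp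
  · simp [vonSterneckFunction_apply, idOnDivisors_apply]
  obtain ⟨i, hik, hg⟩ := (Nat.dvd_prime_pow hp).mp (Nat.gcd_dvd_right m (p ^ (k + 1)))
  rw [coe_moebius_mul_apply_prime_pow_succ _ hp, idOnDivisors_apply_prime_pow hp hg le_rfl,
    idOnDivisors_apply_prime_pow hp hg k.le_succ, vonSterneckFunction_apply, hg,
    Nat.pow_div hik hp.pos, Nat.totient_prime_pow_succ hp]
  obtain rfl | rfl | hi := (show i = k + 1 ∨ i = k ∨ i < k by omega)
  · rw [if_pos le_rfl, if_pos k.le_succ, Nat.sub_self, pow_zero, moebius_apply_one,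
      Nat.totient_one]
    push_cast [Nat.cast_sub hp.one_le]
    ring
  · have hp1 : ((p - 1 : ℕ) : ℂ) ≠ 0 := Nat.cast_ne_zero.mpr (Nat.sub_ne_zero_of_lt hp.one_lt)
    simp [moebius_apply_prime hp, Nat.totient_prime hp, neg_div, hp1]
  · rw [if_neg (by omega), if_neg (by omega), moebius_apply_prime_pow hp (by omega),
      if_neg (by omega)]
    simp

theorem vonSterneck_general (n m : ℕ) :
    ramanujanSum n m =
      ((ArithmeticFunction.moebius (n / Nat.gcd m n) : ℤ) : ℂ) *
        (Nat.totient n : ℂ) / (Nat.totient (n / Nat.gcd m n) : ℂ) := by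
  rw [ramanujanSum_eq_moebius_mul, moebius_mul_idOnDivisors, vonSterneckFunction_apply]

theorem vonSterneck (n m : ℕ) (hn : 1 ≤ n) (hm : 1 ≤ m) :
    ramanujanSum n m =
      ((ArithmeticFunction.moebius (n / Nat.gcd m n) : ℤ) : ℂ) *
        (Nat.totient n : ℂ) / (Nat.totient (n / Nat.gcd m n) : ℂ) :=
  vonSterneck_general n m
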